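/- arXiv:2210.15345 — 2 statements merged into one kernel-verified Lean document; each statement's English description precedes it below -/
import Mathlib

section
/- Let d ≥ 2 and a, b > 0 with a + (d−1)b = 1, and let Q be the d×d matrix with Q_{11} = a/d + (d−1)b, Q_{1j} = Q_{j1} = b/√d for j ≥ 2, and Q_{ij} = (b/d)δ_{ij} for i, j ≥ 2. Then the eigenvalues of Q are λ = b/d with multiplicity d−2 together with the two roots of λ² − (1/d + (d²−2d+2)b/d)λ + (b − (d−1)b²)/d² = 0. -/
open Matrix Polynomial

/-!
`Q` is an arrowhead matrix: first row `(α, β, …, β)`, first column `(α, γ, …, γ)`, and `p` on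
the rest of the diagonal. Multiplying it on the right by the lower triangular matrix with first
column `(p, -γ, …, -γ)` and ones elsewhere on the diagonal clears the first column below the
corner, so `p · det = (α p - n β γ) pⁿ`. For the characteristic matrix `p = X - C (b/d)` is monic,
hence cancellable, which yields the factor `(X - C (b/d))^(d-2)` times a quadratic.
-/

namespace Matrix

variable {R : Type*} [CommRing R]

def arrowhead (n : ℕ) (α β γ p : R) : Matrix (Fin (n + 1)) (Fin (n + 1)) R :=
  of fun i j => if i = 0 then (if j = 0 then α else β)
    else if j = 0 then γ else if i = j then p else 0

theorem det_arrowhead_mul (n : ℕ) (α β γ p : R) :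
    p * (arrowhead n α β γ p).det = (α * p - n * β * γ) * p ^ n := by
  let E : Matrix (Fin (n + 1)) (Fin (n + 1)) R :=
    of fun i j => if j = 0 then (if i = 0 then p else -γ) else if i = j then 1 else 0
  let U : Matrix (Fin (n + 1)) (Fin (n + 1)) R :=
    of fun i j => if i = 0 then (if j = 0 then α * p - n * β * γ else β)
      else if i = j then p else 0
  have hE : E.det = p := by
    rw [det_of_isLowerTriangular]
    · simp [E]
    · intro i j hij
      have hj : j ≠ 0 := by rintro rfl; exact Fin.not_lt_zero _ hij
      simp [E, hj, (OrderDual.toDual_lt_toDual.mp hij).ne]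
  have hU : U.det = (α * p - n * β * γ) * p ^ n := by
    rw [det_of_isUpperTriangular]
    · simp [U, Fin.prod_univ_succ]
    · intro i j hij
      have hi : i ≠ 0 := by rintro rfl; exact Fin.not_lt_zero _ hij
      simp [U, hi, (show j < i from hij).ne']
  have hMU : arrowhead n α β γ p * E = U := by
    ext i j
    cases i using Fin.cases <;> cases j using Fin.cases <;>
      simp [arrowhead, E, U, mul_apply, Fin.sum_univ_succ, Fin.succ_ne_zero]
    all_goals ring
  rw [← hU, ← hMU, det_mul, hE, mul_comm]

theorem charmatrix_arrowhead (n : ℕ) (α β γ p : R) :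
    charmatrix (arrowhead n α β γ p) = arrowhead n (X - C α) (-C β) (-C γ) (X - C p) := by
  ext i j
  by_cases hi : i = 0 <;> by_cases hj : j = 0 <;> by_cases hij : i = j <;>
    simp_all [arrowhead]

theorem charpoly_arrowhead (m : ℕ) (α β γ p : R) :
    (arrowhead (m + 1) α β γ p).charpoly =
      (X - C p) ^ m * ((X - C α) * (X - C p) - C ((m + 1) * β * γ)) := by
  apply (monic_X_sub_C p).isRegular.left
  show (X - C p) * _ = (X - C p) * _
  rw [charpoly, charmatrix_arrowhead, det_arrowhead_mul]
  simp only [map_mul, map_add, map_natCast, map_one, Nat.cast_add, Nat.cast_one]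
  ring

end Matrix

theorem stmt8_general (d : ℕ) [NeZero d] (hd : 2 ≤ d) (a b : ℝ)
    (hab : a + ((d : ℝ) - 1) * b = 1)
    (Q : Matrix (Fin d) (Fin d) ℝ)
    (hQ : Q = Matrix.of fun i j =>
      if i = 0 then
        (if j = 0 then a / d + ((d : ℝ) - 1) * b else b / Real.sqrt d)
      else if j = 0 then b / Real.sqrt d
      else if i = j then b / d else 0) :
    Q.charpoly =
      (X - C (b / d)) ^ (d - 2) *
        (X ^ 2 - C (1 / d + ((d : ℝ) ^ 2 - 2 * d + 2) * b / d) * X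
          + C ((b - ((d : ℝ) - 1) * b ^ 2) / (d : ℝ) ^ 2)) := by
  obtain ⟨m, rfl⟩ : ∃ m, d = m + 2 := ⟨d - 2, by omega⟩
  set D : ℝ := ((m + 2 : ℕ) : ℝ) with hD
  have hD0 : 0 < D := by positivity
  have hQ : Q = arrowhead (m + 1) (a / D + (D - 1) * b) (b / √D) (b / √D) (b / D) := hQ
  have hm : (m : ℝ) + 1 = D - 1 := by rw [hD]; push_cast; ring
  have hsqrt : b / √D * (b / √D) = b ^ 2 / D := by
    rw [div_mul_div_comm, Real.mul_self_sqrt hD0.le, sq]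
  rw [hQ, charpoly_arrowhead, Nat.add_sub_cancel, mul_assoc _ (b / √D), hsqrt, hm]
  congr 1
  have ha : a = 1 - (D - 1) * b := by linarith
  have hs : 1 / D + (D ^ 2 - 2 * D + 2) * b / D = (a / D + (D - 1) * b) + b / D := by
    rw [ha]; field_simp; ring
  have ht : (b - (D - 1) * b ^ 2) / D ^ 2 =
      (a / D + (D - 1) * b) * (b / D) - (D - 1) * (b ^ 2 / D) := by
    rw [ha]; field_simp; ring
  rw [hs, ht]
  simp only [map_add, map_sub, map_mul]
  ring

/-- The characteristic polynomial of `Q` factors as `(X - b/d)^(d-2)` times the quadratic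
`X² − (1/d + (d²−2d+2)b/d)·X + (b − (d−1)b²)/d²`, i.e. the eigenvalues of `Q` are `b/d`
with multiplicity `d − 2` together with the two roots of that quadratic. -/
theorem stmt8 (d : ℕ) [NeZero d] (hd : 2 ≤ d) (a b : ℝ) (ha : 0 < a) (hb : 0 < b)
    (hab : a + ((d : ℝ) - 1) * b = 1)
    (Q : Matrix (Fin d) (Fin d) ℝ)
    (hQ : Q = Matrix.of fun i j =>
      if i = 0 then
        (if j = 0 then a / d + ((d : ℝ) - 1) * b else b / Real.sqrt d)
      else if j = 0 then b / Real.sqrt d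
      else if i = j then b / d else 0) :
    Q.charpoly =
      (X - C (b / d)) ^ (d - 2) *
        (X ^ 2 - C (1 / d + ((d : ℝ) ^ 2 - 2 * d + 2) * b / d) * X
          + C ((b - ((d : ℝ) - 1) * b ^ 2) / (d : ℝ) ^ 2)) :=
  stmt8_general d hd a b hab Q hQ
end

section
/- With the one-sample estimator θ̃ = θ₀ + Q^{-1}X(y − ⟨X, θ₀⟩) as above, for each coordinate i, Var(θ̃_i) ≤ (R₀² + σ²)·(Q^{-1})_{ii}. -/
/-!
Write `g x = (Q⁻¹ x)ᵢ` and `Δ = θ* − θ₀`. The error splits as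
`θ̃ᵢ − θ*ᵢ = (g(X)⟨X, Δ⟩ − Δᵢ) + g(X) η`. Since `E[g(X)⟨X, w⟩] = (Q⁻¹ Q w)ᵢ = wᵢ`, the first
summand is `g(X)⟨X, Δ⟩` minus its mean, so its second moment is a variance, at most
`E[g(X)² ⟨X, Δ⟩²] ≤ R₀² E[g(X)²] = R₀² (Q⁻¹)ᵢᵢ`. Conditioning on `X` kills the cross term and
bounds the noise term by `σ² E[g(X)²]`. Finiteness of the support of `X` makes every function
of `X` bounded, which supplies all integrability.
-/

open Matrix MeasureTheory ProbabilityTheory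

lemma integral_dotProduct_mul_dotProduct {Ω n : Type*} [Fintype n] [MeasurableSpace Ω]
    {μ : Measure Ω} {X : Ω → n → ℝ} {Q : Matrix n n ℝ}
    (hQ : ∀ j k, Q j k = ∫ ω, X ω j * X ω k ∂μ)
    (hint : ∀ j k, Integrable (fun ω => X ω j * X ω k) μ) (v w : n → ℝ) :
    ∫ ω, (v ⬝ᵥ X ω) * (X ω ⬝ᵥ w) ∂μ = v ⬝ᵥ (Q *ᵥ w) := by
  have hexpand : ∀ ω, (v ⬝ᵥ X ω) * (X ω ⬝ᵥ w) = ∑ j, v j * ∑ k, X ω j * X ω k * w k := by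
    intro ω
    rw [dotProduct, dotProduct, Finset.sum_mul]
    refine Finset.sum_congr rfl fun j _ => ?_
    rw [Finset.mul_sum, Finset.mul_sum]
    exact Finset.sum_congr rfl fun k _ => by ring
  show _ = ∑ j, v j * ∑ k, Q j k * w k
  simp only [hexpand]
  rw [integral_finsetSum _ fun j _ => (integrable_finsetSum _ fun k _ =>
    (hint j k).mul_const _).const_mul _]
  refine Finset.sum_congr rfl fun j _ => ?_
  rw [integral_const_mul, integral_finsetSum _ fun k _ => (hint j k).mul_const _]
  simp only [integral_mul_const, hQ]

lemma integral_add_sq_of_integral_mul_eq_zero {Ω : Type*} [MeasurableSpace Ω] {μ : Measure Ω}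
    {a b : Ω → ℝ} (ha : Integrable (fun ω => a ω ^ 2) μ) (hab : Integrable (fun ω => a ω * b ω) μ)
    (hb : Integrable (fun ω => b ω ^ 2) μ) (horth : ∫ ω, a ω * b ω ∂μ = 0) :
    ∫ ω, (a ω + b ω) ^ 2 ∂μ = ∫ ω, a ω ^ 2 ∂μ + ∫ ω, b ω ^ 2 ∂μ := by
  have hexpand : ∀ ω, (a ω + b ω) ^ 2 = a ω ^ 2 + 2 * (a ω * b ω) + b ω ^ 2 := fun ω => by ring
  simp only [hexpand]
  rw [integral_add (f := fun ω => a ω ^ 2 + 2 * (a ω * b ω)) (ha.add (hab.const_mul 2)) hb,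
    integral_add ha (hab.const_mul 2),
    integral_const_mul, horth, mul_zero, add_zero]

section FiniteValued

variable {Ω E : Type*} {X : Ω → E} {A : Finset E}

lemma norm_comp_le_sum_of_mem_finset (hXA : ∀ ω, X ω ∈ A) (ψ : E → ℝ) (ω : Ω) :
    ‖ψ (X ω)‖ ≤ ∑ a ∈ A, ‖ψ a‖ :=
  Finset.single_le_sum (f := fun a => ‖ψ a‖) (fun _ _ => norm_nonneg _) (hXA ω)

variable [MeasurableSpace E] {m0 : MeasurableSpace Ω} {μ : Measure Ω} {ψ : E → ℝ} {f : Ω → ℝ}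

lemma integrable_comp_of_mem_finset [IsFiniteMeasure μ] (hX : Measurable X)
    (hXA : ∀ ω, X ω ∈ A) (hψ : Measurable ψ) : Integrable (fun ω => ψ (X ω)) μ :=
  (integrable_const _).mono' (hψ.comp hX).aestronglyMeasurable
    (ae_of_all _ (norm_comp_le_sum_of_mem_finset hXA ψ))

lemma MeasureTheory.Integrable.comp_mul_of_mem_finset (hX : Measurable X) (hXA : ∀ ω, X ω ∈ A)
    (hψ : Measurable ψ) (hf : Integrable f μ) : Integrable (fun ω => ψ (X ω) * f ω) μ :=
  hf.bdd_mul (hψ.comp hX).aestronglyMeasurable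
    (ae_of_all _ (norm_comp_le_sum_of_mem_finset hXA ψ))

lemma integral_comp_mul_condExp [IsFiniteMeasure μ] (hX : Measurable X)
    (hXA : ∀ ω, X ω ∈ A) (hψ : Measurable ψ) (hf : Integrable f μ) :
    ∫ ω, ψ (X ω) * μ[f | MeasurableSpace.comap X inferInstance] ω ∂μ =
      ∫ ω, ψ (X ω) * f ω ∂μ := by
  have hψX : StronglyMeasurable[MeasurableSpace.comap X inferInstance] (ψ ∘ X) :=
    (hψ.comp (comap_measurable X)).stronglyMeasurable
  have hψXf : Integrable (fun ω => ψ (X ω) * f ω) μ := hf.comp_mul_of_mem_finset hX hXA hψ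
  calc ∫ ω, ψ (X ω) * μ[f | MeasurableSpace.comap X inferInstance] ω ∂μ
      = ∫ ω, μ[(ψ ∘ X) * f | MeasurableSpace.comap X inferInstance] ω ∂μ :=
        integral_congr_ae (condExp_mul_of_stronglyMeasurable_left hψX hψXf hf).symm
    _ = ∫ ω, ψ (X ω) * f ω ∂μ := integral_condExp hX.comap_le

lemma integral_comp_mul_eq_zero_of_condExp_eq_zero [IsFiniteMeasure μ] (hX : Measurable X)
    (hXA : ∀ ω, X ω ∈ A) (hψ : Measurable ψ) (hf : Integrable f μ)
    (hcond : μ[f | MeasurableSpace.comap X inferInstance] =ᵐ[μ] 0) :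
    ∫ ω, ψ (X ω) * f ω ∂μ = 0 := by
  rw [← integral_comp_mul_condExp hX hXA hψ hf]
  exact integral_eq_zero_of_ae (hcond.mono fun ω hω => by simp [hω])

lemma integral_comp_mul_le_of_condExp_le [IsFiniteMeasure μ] (hX : Measurable X)
    (hXA : ∀ ω, X ω ∈ A) (hψ : Measurable ψ) (hψ0 : ∀ x, 0 ≤ ψ x) (hf : Integrable f μ)
    {s : ℝ} (hcond : ∀ᵐ ω ∂μ, μ[f | MeasurableSpace.comap X inferInstance] ω ≤ s) :
    ∫ ω, ψ (X ω) * f ω ∂μ ≤ s * ∫ ω, ψ (X ω) ∂μ := by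
  rw [← integral_comp_mul_condExp hX hXA hψ hf, ← integral_const_mul]
  refine integral_mono_ae (integrable_condExp.comp_mul_of_mem_finset hX hXA hψ)
    ((integrable_comp_of_mem_finset hX hXA hψ).const_mul s) ?_
  filter_upwards [hcond] with ω hω
  rw [mul_comm s]
  exact mul_le_mul_of_nonneg_left hω (hψ0 _)

lemma integral_comp_add_comp_mul_sq_of_condExp_eq_zero [IsFiniteMeasure μ] (hX : Measurable X)
    (hXA : ∀ ω, X ω ∈ A) {a b : E → ℝ} (ha : Measurable a) (hb : Measurable b)
    (hf : MemLp f 2 μ) (hcond : μ[f | MeasurableSpace.comap X inferInstance] =ᵐ[μ] 0) :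
    ∫ ω, (a (X ω) + b (X ω) * f ω) ^ 2 ∂μ =
      ∫ ω, a (X ω) ^ 2 ∂μ + ∫ ω, b (X ω) ^ 2 * f ω ^ 2 ∂μ := by
  have hf1 : Integrable f μ := hf.integrable one_le_two
  simp only [← mul_pow]
  refine integral_add_sq_of_integral_mul_eq_zero (a := fun ω => a (X ω))
    (b := fun ω => b (X ω) * f ω) (integrable_comp_of_mem_finset (ψ := fun x => a x ^ 2) hX hXA
      (ha.pow_const 2)) ?_ ?_ ?_
  · simpa only [Pi.mul_apply, mul_assoc] using hf1.comp_mul_of_mem_finset hX hXA (ha.mul hb)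
  · simpa only [mul_pow] using hf.integrable_sq.comp_mul_of_mem_finset hX hXA (hb.pow_const 2)
  · simpa only [Pi.mul_apply, mul_assoc] using
      integral_comp_mul_eq_zero_of_condExp_eq_zero hX hXA (ha.mul hb) hf1 hcond

lemma integral_comp_mul_sub_integral_sq_le [IsProbabilityMeasure μ] (hX : Measurable X)
    (hXA : ∀ ω, X ω ∈ A) {G U : E → ℝ} (hG : Measurable G) (hU : Measurable U) {R : ℝ}
    (hUR : ∀ x ∈ A, |U x| ≤ R) :
    ∫ ω, (G (X ω) * U (X ω) - ∫ ω', G (X ω') * U (X ω') ∂μ) ^ 2 ∂μ ≤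
      R ^ 2 * ∫ ω, G (X ω) ^ 2 ∂μ := by
  have hGU : Measurable fun ω => G (X ω) * U (X ω) := (hG.comp hX).mul (hU.comp hX)
  have hbound : ∀ ω, (G (X ω) * U (X ω)) ^ 2 ≤ R ^ 2 * G (X ω) ^ 2 := fun ω => by
    have hUR' : |U (X ω)| ≤ |R| := (hUR _ (hXA ω)).trans (le_abs_self R)
    rw [mul_pow, mul_comm (R ^ 2)]
    exact mul_le_mul_of_nonneg_left (sq_le_sq.mpr hUR') (sq_nonneg _)
  calc _ = Var[fun ω => G (X ω) * U (X ω); μ] := (variance_eq_integral hGU.aemeasurable).symm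
    _ ≤ ∫ ω, (G (X ω) * U (X ω)) ^ 2 ∂μ := variance_le_expectation_sq hGU.aestronglyMeasurable
    _ ≤ ∫ ω, R ^ 2 * G (X ω) ^ 2 ∂μ := integral_mono
        (integrable_comp_of_mem_finset (ψ := fun x => (G x * U x) ^ 2) hX hXA (by fun_prop))
        ((integrable_comp_of_mem_finset hX hXA (hG.pow_const 2)).const_mul _) hbound
    _ = R ^ 2 * ∫ ω, G (X ω) ^ 2 ∂μ := integral_const_mul _ _

end FiniteValued

theorem stmt14_general
    {Ω : Type*} [MeasureSpace Ω] [IsProbabilityMeasure (ℙ : Measure Ω)]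
    (d : ℕ) (X : Ω → Fin d → ℝ) (η : Ω → ℝ)
    (hX : Measurable X)
    (A : Finset (Fin d → ℝ)) (hAne : A.Nonempty) (hXA : ∀ ω, X ω ∈ A)
    (θstar θ0 : Fin d → ℝ) (σ : ℝ)
    (Q : Matrix (Fin d) (Fin d) ℝ)
    (hQ : ∀ i j, Q i j = ∫ ω, X ω i * X ω j)
    (hQinv : IsUnit Q.det)
    (hη2 : MemLp η 2 ℙ)
    (hcond0 : MeasureTheory.condExp (MeasurableSpace.comap X inferInstance) ℙ η =ᵐ[ℙ] 0)
    (hcondvar : ∀ᵐ ω ∂ℙ,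
      MeasureTheory.condExp (MeasurableSpace.comap X inferInstance) ℙ (fun ω' => η ω' ^ 2) ω ≤ σ ^ 2)
    (y : Ω → ℝ) (hy : ∀ ω, y ω = X ω ⬝ᵥ θstar + η ω)
    (θt : Ω → Fin d → ℝ)
    (hθt : ∀ ω i, θt ω i = θ0 i + (Q⁻¹ *ᵥ X ω) i * (y ω - X ω ⬝ᵥ θ0))
    (R0 : ℝ) (hR0 : R0 = A.sup' hAne fun a => |a ⬝ᵥ (θstar - θ0)|) :
    ∀ i, ∫ ω, (θt ω i - θstar i) ^ 2 ≤ (R0 ^ 2 + σ ^ 2) * Q⁻¹ i i := by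
  intro i
  set Δ := θstar - θ0
  set g : (Fin d → ℝ) → ℝ := fun x => Q⁻¹ i ⬝ᵥ x
  have hg : Measurable g := by fun_prop
  have hu : Measurable fun x : Fin d → ℝ => x ⬝ᵥ Δ := by fun_prop
  have herror : ∀ ω, θt ω i - θstar i = (g (X ω) * (X ω ⬝ᵥ Δ) - Δ i) + g (X ω) * η ω :=
    fun ω => by
      simp only [hθt, hy, g, Δ, mulVec, dotProduct_sub, Pi.sub_apply]
      ring
  have hmoment : ∀ w, ∫ ω, g (X ω) * (X ω ⬝ᵥ w) = w i := fun w => by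
    rw [integral_dotProduct_mul_dotProduct hQ (fun j k =>
      integrable_comp_of_mem_finset hX hXA
        ((measurable_pi_apply j).mul (measurable_pi_apply k)))]
    change (Q⁻¹ *ᵥ (Q *ᵥ w)) i = w i
    rw [mulVec_mulVec, nonsing_inv_mul Q hQinv, one_mulVec]
  have hg2 : ∫ ω, g (X ω) ^ 2 = Q⁻¹ i i := by
    simpa only [sq, dotProduct_comm _ (Q⁻¹ i)] using hmoment (Q⁻¹ i)
  have hbias : ∫ ω, (g (X ω) * (X ω ⬝ᵥ Δ) - Δ i) ^ 2 ≤ R0 ^ 2 * Q⁻¹ i i := by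
    simpa only [hmoment Δ, hg2] using integral_comp_mul_sub_integral_sq_le (μ := ℙ) hX hXA hg hu
      fun x hx => hR0 ▸ Finset.le_sup' (fun a => |a ⬝ᵥ Δ|) hx
  have hnoise : ∫ ω, g (X ω) ^ 2 * η ω ^ 2 ≤ σ ^ 2 * Q⁻¹ i i := by
    simpa only [hg2] using integral_comp_mul_le_of_condExp_le hX hXA (hg.pow_const 2)
      (fun _ => sq_nonneg _) hη2.integrable_sq hcondvar
  calc ∫ ω, (θt ω i - θstar i) ^ 2
      = (∫ ω, (g (X ω) * (X ω ⬝ᵥ Δ) - Δ i) ^ 2) + ∫ ω, g (X ω) ^ 2 * η ω ^ 2 := by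
        simp only [herror]
        exact integral_comp_add_comp_mul_sq_of_condExp_eq_zero hX hXA
          (a := fun x => g x * (x ⬝ᵥ Δ) - Δ i) (by fun_prop) hg hη2 hcond0
    _ ≤ (R0 ^ 2 + σ ^ 2) * Q⁻¹ i i := by linarith

/-- The one-sample estimator `θ̃ = θ₀ + Q⁻¹ X (y − ⟨X, θ₀⟩)` satisfies the per-coordinate
variance bound `Var(θ̃ᵢ) ≤ (R₀² + σ²)(Q⁻¹)_{ii}`. -/
theorem stmt14
    {Ω : Type*} [MeasureSpace Ω] [IsProbabilityMeasure (ℙ : Measure Ω)]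
    (d : ℕ) (X : Ω → Fin d → ℝ) (η : Ω → ℝ)
    (hX : Measurable X) (hη : Measurable η)
    (A : Finset (Fin d → ℝ)) (hAne : A.Nonempty) (hXA : ∀ ω, X ω ∈ A)
    (θstar θ0 : Fin d → ℝ) (σ : ℝ)
    (Q : Matrix (Fin d) (Fin d) ℝ)
    (hQ : ∀ i j, Q i j = ∫ ω, X ω i * X ω j)
    (hQinv : IsUnit Q.det)
    (hη2 : MemLp η 2 ℙ)
    (hcond0 : MeasureTheory.condExp (MeasurableSpace.comap X inferInstance) ℙ η =ᵐ[ℙ] 0)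
    (hcondvar : ∀ᵐ ω ∂ℙ,
      MeasureTheory.condExp (MeasurableSpace.comap X inferInstance) ℙ (fun ω' => η ω' ^ 2) ω ≤ σ ^ 2)
    (y : Ω → ℝ) (hy : ∀ ω, y ω = X ω ⬝ᵥ θstar + η ω)
    (θt : Ω → Fin d → ℝ)
    (hθt : ∀ ω i, θt ω i = θ0 i + (Q⁻¹ *ᵥ X ω) i * (y ω - X ω ⬝ᵥ θ0))
    (R0 : ℝ) (hR0 : R0 = A.sup' hAne fun a => |a ⬝ᵥ (θstar - θ0)|) :
    ∀ i, ∫ ω, (θt ω i - θstar i) ^ 2 ≤ (R0 ^ 2 + σ ^ 2) * Q⁻¹ i i :=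
  stmt14_general d X η hX A hAne hXA θstar θ0 σ Q hQ hQinv hη2 hcond0 hcondvar y hy θt hθt R0 hR0
end
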